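/- arXiv:2411.08468 — 2 statements merged into one kernel-verified Lean document; each statement's English description precedes it below -/
import Mathlib

section
/- Let Σ̂ be a p×p real symmetric positive definite matrix with D = Σ̂⁻¹, let μ > 0, and let L, S be p×p real symmetric matrices with L + S positive definite and Y = (L+S)⁻¹. Let i ≠ j be indices, set Δ = Y_{ii}·Y_{jj} − Y_{ij}², and let δ ∈ ℝ with q(δ) := −Δ·δ² + 2·Y_{ij}·δ + 1 > 0. Then f(L, S + δ·(e_i e_jᵀ + e_j e_iᵀ)) − f(L, S) = μ·(−log q(δ) + 2·δ·D_{ij}). -/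
open Matrix

/-- The smooth part of the factor-analysis objective. -/
noncomputable def faObj {p : ℕ} (μ : ℝ) (SigHat L S : Matrix (Fin p) (Fin p) ℝ) : ℝ :=
  L.trace + μ * (((L + S) * SigHat⁻¹).trace - Real.log ((L + S).det))

namespace Matrix

variable {n R : Type*} [Fintype n] [DecidableEq n]

theorem trace_add_single_add_single_mul [CommRing R] (A B : Matrix n n R) (i j : n) (δ : R) :
    ((A + single i j δ + single j i δ) * B).trace = (A * B).trace + δ * B j i + δ * B i j := by
  simp only [Matrix.add_mul, trace_add, trace_single_mul, smul_eq_mul, add_assoc]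

theorem det_add_single_add_single [CommRing R] {A : Matrix n n R} (hA : IsUnit A.det)
    (i j : n) (δ : R) :
    (A + single i j δ + single j i δ).det =
      A.det * ((1 + δ * A⁻¹ j i) * (1 + δ * A⁻¹ i j) - δ ^ 2 * A⁻¹ i i * A⁻¹ j j) := by
  -- The update factors as `U * V` through `Fin 2`, so the matrix determinant lemma leaves a
  -- `2 × 2` determinant.
  let U : Matrix n (Fin 2) R := single i 0 δ + single j 1 δ
  let V : Matrix (Fin 2) n R := single 0 j 1 + single 1 i 1
  have hUV : U * V = single i j δ + single j i δ := by
    simp [U, V, Matrix.add_mul, Matrix.mul_add]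
  have hVU : 1 + V * A⁻¹ * U =
      !![1 + δ * A⁻¹ j i, δ * A⁻¹ j j; δ * A⁻¹ i i, 1 + δ * A⁻¹ i j] := by
    ext a b
    fin_cases a <;> fin_cases b <;> simp [U, V, Matrix.mul_add, Matrix.add_mul, mul_comm]
  rw [add_assoc, ← hUV, det_add_mul U V hA, hVU, det_fin_two_of]
  ring

end Matrix

theorem faObj_diff_offdiag_update_general {p : ℕ}
    (SigHat : Matrix (Fin p) (Fin p) ℝ) (hSig : SigHat.PosDef)
    (μ : ℝ)
    (L S : Matrix (Fin p) (Fin p) ℝ)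
    (hLS : (L + S).PosDef) (i j : Fin p) (δ : ℝ)
    (hq : 0 < -((L + S)⁻¹ i i * (L + S)⁻¹ j j - ((L + S)⁻¹ i j) ^ 2) * δ ^ 2 +
            2 * (L + S)⁻¹ i j * δ + 1) :
    faObj μ SigHat L (S + Matrix.single i j δ + Matrix.single j i δ) -
        faObj μ SigHat L S =
      μ * (-Real.log (-((L + S)⁻¹ i i * (L + S)⁻¹ j j - ((L + S)⁻¹ i j) ^ 2) * δ ^ 2 +
              2 * (L + S)⁻¹ i j * δ + 1) +
            2 * δ * SigHat⁻¹ i j) := by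
  have hY : (L + S)⁻¹ j i = (L + S)⁻¹ i j := by simpa using hLS.isHermitian.inv.apply i j
  have hD : SigHat⁻¹ j i = SigHat⁻¹ i j := by simpa using hSig.isHermitian.inv.apply i j
  have hdet : (L + S + single i j δ + single j i δ).det = (L + S).det *
      (-((L + S)⁻¹ i i * (L + S)⁻¹ j j - ((L + S)⁻¹ i j) ^ 2) * δ ^ 2 +
        2 * (L + S)⁻¹ i j * δ + 1) := by
    rw [det_add_single_add_single hLS.det_pos.ne'.isUnit, hY]
    ring
  have hlog := Real.log_mul hLS.det_pos.ne' hq.ne'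
  rw [← hdet] at hlog
  simp only [faObj, ← add_assoc, trace_add_single_add_single_mul, hlog, hD]
  ring

/-- Change of the smooth objective under a symmetric off-diagonal update of `S`:
with `Y = (L+S)⁻¹`, `Δ = Yᵢᵢ Yⱼⱼ − Yᵢⱼ²`, `D = Σ̂⁻¹`, `i ≠ j` and
`q(δ) = −Δ δ² + 2 Yᵢⱼ δ + 1 > 0`,
`f(L, S + δ(eᵢeⱼᵀ + eⱼeᵢᵀ)) − f(L,S) = μ(−log q(δ) + 2 δ Dᵢⱼ)`. -/
theorem faObj_diff_offdiag_update {p : ℕ}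
    (SigHat : Matrix (Fin p) (Fin p) ℝ) (hSig : SigHat.PosDef)
    (μ : ℝ) (hμ : 0 < μ)
    (L S : Matrix (Fin p) (Fin p) ℝ) (hL : L.IsSymm) (hS : S.IsSymm)
    (hLS : (L + S).PosDef) (i j : Fin p) (hij : i ≠ j) (δ : ℝ)
    (hq : 0 < -((L + S)⁻¹ i i * (L + S)⁻¹ j j - ((L + S)⁻¹ i j) ^ 2) * δ ^ 2 +
            2 * (L + S)⁻¹ i j * δ + 1) :
    faObj μ SigHat L (S + Matrix.single i j δ + Matrix.single j i δ) -
        faObj μ SigHat L S =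
      μ * (-Real.log (-((L + S)⁻¹ i i * (L + S)⁻¹ j j - ((L + S)⁻¹ i j) ^ 2) * δ ^ 2 +
              2 * (L + S)⁻¹ i j * δ + 1) +
            2 * δ * SigHat⁻¹ i j) :=
  faObj_diff_offdiag_update_general SigHat hSig μ L S hLS i j δ hq
end

section
/- Let Σ̂ be a p×p real symmetric positive definite matrix, μ > 0, τ > 0, and let L̂ be a p×p real symmetric positive semidefinite matrix. Suppose Ŝ is a p×p real symmetric positive definite matrix that is a local minimizer, over the set of p×p real symmetric positive definite matrices, of the map S ↦ f(L̂, S) + τ‖S‖₁. Then for every index i, μ·[(L̂+Ŝ)⁻¹]_{ii} = μ·[Σ̂⁻¹]_{ii} + τ, and for every pair i ≠ j with Ŝ_{ij} ≠ 0, μ·[(L̂+Ŝ)⁻¹]_{ij} = μ·[Σ̂⁻¹]_{ij} + τ·sign(Ŝ_{ij}). -/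
open Matrix

/-- The elementwise ℓ1 norm. -/
noncomputable def l1Norm {p : ℕ} (S : Matrix (Fin p) (Fin p) ℝ) : ℝ :=
  ∑ i, ∑ j, |S i j|

/-- Frobenius norm. -/
noncomputable def frobNorm {p : ℕ} (A : Matrix (Fin p) (Fin p) ℝ) : ℝ :=
  Real.sqrt (∑ i, ∑ j, (A i j) ^ 2)

/-! Restrict the objective to the line `t ↦ Ŝ + t • E` with `E = eᵢⱼ + eⱼᵢ`. Positive
definiteness is an open condition, so near `t = 0` the line stays feasible and `t = 0` is a
local minimum of a one-variable function. When `Ŝᵢⱼ ≠ 0`, `E` is supported where `Ŝ` is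
nonzero, so the `ℓ1` term is differentiable along it, and Jacobi's formula
`d/dt log det (A + t • E) = tr (A⁻¹ E)` handles the log-determinant. The vanishing derivative
reads `2μ (Σ̂⁻¹)ᵢⱼ - 2μ ((L̂ + Ŝ)⁻¹)ᵢⱼ + 2τ sign Ŝᵢⱼ = 0`; on the diagonal `Ŝᵢᵢ > 0`. -/

open Filter Topology Polynomial

theorem Real.sign_eq_coe_sign (x : ℝ) : Real.sign x = (SignType.sign x : ℝ) := by
  rcases lt_trichotomy x 0 with h | rfl | h
  · simp [Real.sign_of_neg h, h]
  · simp
  · simp [Real.sign_of_pos h, h]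

theorem hasDerivAt_abs_add_mul {c e : ℝ} (h : c = 0 → e = 0) :
    HasDerivAt (fun t => |c + t * e|) (e * Real.sign c) 0 := by
  rcases eq_or_ne c 0 with rfl | hc
  · simpa [h rfl] using hasDerivAt_const (0 : ℝ) (0 : ℝ)
  · have hline : HasDerivAt (fun t => c + t * e) e 0 := by
      simpa using ((hasDerivAt_id (0 : ℝ)).mul_const e).const_add c
    have := (hasDerivAt_abs (x := c + 0 * e) (by simpa using hc)).comp 0 hline
    rw [zero_mul, add_zero, ← Real.sign_eq_coe_sign, mul_comm] at this
    exact this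

namespace Matrix

variable {n : Type*}

theorem isHermitian_single_add_single [DecidableEq n] {R : Type*} [Semiring R] [StarRing R]
    (i j : n) : (single i j (1 : R) + single j i 1).IsHermitian := by
  simp [IsHermitian, add_comm]

variable [Fintype n]

theorem abs_dotProduct_mulVec_self_le (E : Matrix n n ℝ) (x : n → ℝ) :
    |x ⬝ᵥ E *ᵥ x| ≤ (∑ i, ∑ j, |E i j|) * ‖x‖ ^ 2 := by
  have hx : ∀ i, |x i| ≤ ‖x‖ := fun i => by simpa using norm_le_pi_norm x i
  calc |x ⬝ᵥ E *ᵥ x| = |∑ i, ∑ j, E i j * (x i * x j)| := by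
        simp only [dotProduct, mulVec, Finset.mul_sum]
        congr 1; refine Finset.sum_congr rfl fun i _ => Finset.sum_congr rfl fun j _ => by ring
    _ ≤ ∑ i, ∑ j, |E i j| * (|x i| * |x j|) := by
        refine (Finset.abs_sum_le_sum_abs _ _).trans
          (Finset.sum_le_sum fun i _ => (Finset.abs_sum_le_sum_abs _ _).trans_eq ?_)
        simp only [abs_mul]
    _ ≤ ∑ i, ∑ j, |E i j| * ‖x‖ ^ 2 := by
        gcongr with i _ j _
        rw [sq]
        exact mul_le_mul (hx i) (hx j) (abs_nonneg _) (norm_nonneg _)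
    _ = (∑ i, ∑ j, |E i j|) * ‖x‖ ^ 2 := by simp only [Finset.sum_mul]

theorem PosDef.exists_pos_mul_sq_norm_le {A : Matrix n n ℝ} (hA : A.PosDef) :
    ∃ c > 0, ∀ x : n → ℝ, c * ‖x‖ ^ 2 ≤ x ⬝ᵥ A *ᵥ x := by
  rcases isEmpty_or_nonempty n with hn | hn
  · exact ⟨1, one_pos, fun x => by simp [Subsingleton.elim x 0]⟩
  obtain ⟨u, hu, hmin⟩ := (isCompact_sphere (0 : n → ℝ) 1).exists_isMinOn
    (NormedSpace.sphere_nonempty.2 zero_le_one)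
    (Continuous.continuousOn (f := fun x : n → ℝ => x ⬝ᵥ A *ᵥ x) (by fun_prop))
  have hu0 : u ≠ 0 := ne_zero_of_mem_unit_sphere ⟨u, hu⟩
  refine ⟨u ⬝ᵥ A *ᵥ u, by simpa using hA.dotProduct_mulVec_pos hu0, fun x => ?_⟩
  rcases eq_or_ne x 0 with rfl | hx
  · simp
  have hx' : ‖x‖ ≠ 0 := norm_ne_zero_iff.2 hx
  have hmem : ‖x‖⁻¹ • x ∈ Metric.sphere (0 : n → ℝ) 1 := by
    simp [norm_smul, hx']
  have := hmin hmem
  simp only [Set.mem_ofPred_eq, mulVec_smul, dotProduct_smul, smul_dotProduct, smul_eq_mul] at this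
  calc u ⬝ᵥ A *ᵥ u * ‖x‖ ^ 2 ≤ ‖x‖⁻¹ * (‖x‖⁻¹ * (x ⬝ᵥ A *ᵥ x)) * ‖x‖ ^ 2 := by gcongr
    _ = x ⬝ᵥ A *ᵥ x := by field_simp

theorem PosDef.eventually_posDef_add_smul {A E : Matrix n n ℝ} (hA : A.PosDef)
    (hE : E.IsHermitian) : ∀ᶠ t in 𝓝 (0 : ℝ), (A + t • E).PosDef := by
  obtain ⟨c, hc, hlow⟩ := hA.exists_pos_mul_sq_norm_le
  set K := ∑ i, ∑ j, |E i j|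
  have hsmall : ∀ᶠ t in 𝓝 (0 : ℝ), |t| * K < c :=
    ((continuous_abs.mul continuous_const).tendsto' 0 0 (by simp)).eventually_lt_const hc
  filter_upwards [hsmall] with t ht
  refine PosDef.of_dotProduct_mulVec_pos
    (hA.isHermitian.add (hE.smul (IsSelfAdjoint.all t))) fun x hx => ?_
  have hbound : |t * (x ⬝ᵥ E *ᵥ x)| ≤ |t| * K * ‖x‖ ^ 2 := by
    rw [abs_mul, mul_assoc]
    exact mul_le_mul_of_nonneg_left (abs_dotProduct_mulVec_self_le E x) (abs_nonneg t)
  have hx2 : 0 < ‖x‖ ^ 2 := by positivity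
  rw [star_trivial, add_mulVec, dotProduct_add, smul_mulVec, dotProduct_smul, smul_eq_mul]
  nlinarith [hlow x, neg_abs_le (t * (x ⬝ᵥ E *ᵥ x))]

theorem hasDerivAt_det_one_add_smul {𝕜 : Type*} [NontriviallyNormedField 𝕜] [DecidableEq n]
    (M : Matrix n n 𝕜) : HasDerivAt (fun t : 𝕜 => (1 + t • M).det) M.trace 0 := by
  have h := (det (1 + (X : 𝕜[X]) • M.map C)).hasDerivAt 0
  rw [derivative_det_one_add_X_smul] at h
  convert h using 1
  funext t
  simp [eval_det, ← smul_eq_mul_diagonal]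

theorem hasDerivAt_det_add_smul {𝕜 : Type*} [NontriviallyNormedField 𝕜] [DecidableEq n]
    {A : Matrix n n 𝕜} (hA : IsUnit A.det) (E : Matrix n n 𝕜) :
    HasDerivAt (fun t : 𝕜 => (A + t • E).det) (A.det * (A⁻¹ * E).trace) 0 := by
  have hfactor : ∀ t : 𝕜, A + t • E = A * (1 + t • (A⁻¹ * E)) := fun t => by
    rw [Matrix.mul_add, Matrix.mul_one, Matrix.mul_smul, ← Matrix.mul_assoc,
      mul_nonsing_inv A hA, Matrix.one_mul]
  simp only [hfactor, det_mul]
  exact (hasDerivAt_det_one_add_smul _).const_mul _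

theorem hasDerivAt_log_det_add_smul [DecidableEq n] {A : Matrix n n ℝ} (hA : IsUnit A.det)
    (E : Matrix n n ℝ) :
    HasDerivAt (fun t : ℝ => Real.log (A + t • E).det) (A⁻¹ * E).trace 0 := by
  have := (hasDerivAt_det_add_smul hA E).log (by simpa using hA.ne_zero)
  simpa [hA.ne_zero] using this

theorem trace_single_add_single_mul [DecidableEq n] {R : Type*} [Semiring R] (i j : n)
    (M : Matrix n n R) : ((single i j 1 + single j i 1) * M).trace = M j i + M i j := by
  simp [Matrix.add_mul, trace_single_mul]

theorem sum_single_add_single_mul [DecidableEq n] {R : Type*} [Semiring R] (i j : n)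
    (f : n → n → R) : ∑ k, ∑ l, (single i j 1 + single j i 1 : Matrix n n R) k l * f k l =
      f i j + f j i := by
  simp [add_mul, Finset.sum_add_distrib, single_apply, ite_and]

end Matrix

def IsLocalMinOnPosDef {p : ℕ} (F : Matrix (Fin p) (Fin p) ℝ → ℝ)
    (S : Matrix (Fin p) (Fin p) ℝ) : Prop :=
  ∃ ε > 0, ∀ S', S'.PosDef → frobNorm (S' - S) < ε → F S ≤ F S'

section

variable {p : ℕ}

theorem IsLocalMinOnPosDef.isLocalMin_add_smul {F : Matrix (Fin p) (Fin p) ℝ → ℝ}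
    {S E : Matrix (Fin p) (Fin p) ℝ} (h : IsLocalMinOnPosDef F S) (hS : S.PosDef)
    (hE : E.IsHermitian) : IsLocalMin (fun t : ℝ => F (S + t • E)) 0 := by
  obtain ⟨ε, hε, hmin⟩ := h
  have hcont : Continuous fun t : ℝ => frobNorm (S + t • E - S) := by
    unfold frobNorm; fun_prop
  have hclose : ∀ᶠ t in 𝓝 (0 : ℝ), frobNorm (S + t • E - S) < ε :=
    (hcont.tendsto' 0 0 (by simp [frobNorm])).eventually_lt_const hε
  filter_upwards [hS.eventually_posDef_add_smul hE, hclose] with t hpos hnear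
  simpa using hmin _ hpos hnear

theorem hasDerivAt_l1Norm_add_smul {S E : Matrix (Fin p) (Fin p) ℝ}
    (hE : ∀ i j, S i j = 0 → E i j = 0) :
    HasDerivAt (fun t : ℝ => l1Norm (S + t • E)) (∑ i, ∑ j, E i j * Real.sign (S i j)) 0 := by
  simp only [l1Norm, Matrix.add_apply, Matrix.smul_apply, smul_eq_mul]
  exact HasDerivAt.fun_sum fun i _ => HasDerivAt.fun_sum fun j _ =>
    hasDerivAt_abs_add_mul (hE i j)

theorem hasDerivAt_faObj_add_smul (μ : ℝ) (SigHat L S E : Matrix (Fin p) (Fin p) ℝ)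
    (hLS : IsUnit (L + S).det) :
    HasDerivAt (fun t : ℝ => faObj μ SigHat L (S + t • E))
      (μ * ((E * SigHat⁻¹).trace - ((L + S)⁻¹ * E).trace)) 0 := by
  simp only [faObj, ← add_assoc, add_mul _ (_ • E), trace_add, smul_mul, trace_smul, smul_eq_mul]
  have htrace := ((hasDerivAt_id' (0 : ℝ)).mul_const (E * SigHat⁻¹).trace).const_add
    ((L + S) * SigHat⁻¹).trace
  simpa using ((htrace.sub (hasDerivAt_log_det_add_smul hLS E)).const_mul μ).const_add L.trace

theorem stationarity_of_ne_zero {μ τ : ℝ} {SigHat Lhat Shat : Matrix (Fin p) (Fin p) ℝ}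
    (hSig : SigHat.IsHermitian) (hShat : Shat.PosDef) (hLS : (Lhat + Shat).PosDef)
    (hloc : IsLocalMinOnPosDef (fun S => faObj μ SigHat Lhat S + τ * l1Norm S) Shat)
    {i j : Fin p} (hij : Shat i j ≠ 0) :
    μ * (Lhat + Shat)⁻¹ i j = μ * SigHat⁻¹ i j + τ * Real.sign (Shat i j) := by
  set E : Matrix (Fin p) (Fin p) ℝ := single i j 1 + single j i 1
  have hS_symm : Shat j i = Shat i j := by simpa using hShat.isHermitian.apply i j
  have hD_symm : SigHat⁻¹ j i = SigHat⁻¹ i j := by simpa using hSig.inv.apply i j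
  have hY_symm : (Lhat + Shat)⁻¹ j i = (Lhat + Shat)⁻¹ i j := by
    simpa using hLS.isHermitian.inv.apply i j
  have hsupp : ∀ k l, Shat k l = 0 → E k l = 0 := by
    intro k l hkl
    simp only [E, Matrix.add_apply, single_apply]
    split_ifs <;> simp_all
  have hderiv := (hasDerivAt_faObj_add_smul μ SigHat Lhat Shat E hLS.det_pos.ne'.isUnit).add
    ((hasDerivAt_l1Norm_add_smul hsupp).const_mul τ)
  have hzero := (hloc.isLocalMin_add_smul hShat
    (isHermitian_single_add_single i j)).hasDerivAt_eq_zero hderiv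
  rw [trace_single_add_single_mul, trace_mul_comm, trace_single_add_single_mul,
    sum_single_add_single_mul, hS_symm, hD_symm, hY_symm] at hzero
  linarith

end

theorem l1_local_min_stationarity_general {p : ℕ}
    (SigHat : Matrix (Fin p) (Fin p) ℝ) (hSig : SigHat.PosDef)
    (μ τ : ℝ)
    (Lhat : Matrix (Fin p) (Fin p) ℝ) (hLhat : Lhat.PosSemidef)
    (Shat : Matrix (Fin p) (Fin p) ℝ) (hShat : Shat.PosDef)
    (hloc : ∃ ε : ℝ, 0 < ε ∧
      ∀ S : Matrix (Fin p) (Fin p) ℝ, S.PosDef → frobNorm (S - Shat) < ε →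
        faObj μ SigHat Lhat Shat + τ * l1Norm Shat ≤
          faObj μ SigHat Lhat S + τ * l1Norm S) :
    (∀ i : Fin p, μ * (Lhat + Shat)⁻¹ i i = μ * SigHat⁻¹ i i + τ) ∧
    (∀ i j : Fin p, i ≠ j → Shat i j ≠ 0 →
      μ * (Lhat + Shat)⁻¹ i j = μ * SigHat⁻¹ i j + τ * Real.sign (Shat i j)) := by
  have hLS : (Lhat + Shat).PosDef := hShat.posSemidef_add hLhat
  refine ⟨fun i => ?_, fun i j _ hij => stationarity_of_ne_zero hSig.isHermitian hShat hLS hloc hij⟩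
  have hdiag : 0 < Shat i i := hShat.diag_pos
  simpa [Real.sign_of_pos hdiag] using
    stationarity_of_ne_zero hSig.isHermitian hShat hLS hloc hdiag.ne'

/-- First-order (stationarity) conditions at a local minimizer of the
ℓ1-regularized objective `S ↦ f(L̂,S) + τ‖S‖₁` over symmetric positive definite
matrices: on the diagonal, `μ Yᵢᵢ = μ Dᵢᵢ + τ`, and at every nonzero
off-diagonal entry, `μ Yᵢⱼ = μ Dᵢⱼ + τ sign(Ŝᵢⱼ)`, where `Y = (L̂+Ŝ)⁻¹` and
`D = Σ̂⁻¹`. -/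
theorem l1_local_min_stationarity {p : ℕ}
    (SigHat : Matrix (Fin p) (Fin p) ℝ) (hSig : SigHat.PosDef)
    (μ τ : ℝ) (hμ : 0 < μ) (hτ : 0 < τ)
    (Lhat : Matrix (Fin p) (Fin p) ℝ) (hLhat : Lhat.PosSemidef)
    (Shat : Matrix (Fin p) (Fin p) ℝ) (hShat : Shat.PosDef)
    (hloc : ∃ ε : ℝ, 0 < ε ∧
      ∀ S : Matrix (Fin p) (Fin p) ℝ, S.PosDef → frobNorm (S - Shat) < ε →
        faObj μ SigHat Lhat Shat + τ * l1Norm Shat ≤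
          faObj μ SigHat Lhat S + τ * l1Norm S) :
    (∀ i : Fin p, μ * (Lhat + Shat)⁻¹ i i = μ * SigHat⁻¹ i i + τ) ∧
    (∀ i j : Fin p, i ≠ j → Shat i j ≠ 0 →
      μ * (Lhat + Shat)⁻¹ i j = μ * SigHat⁻¹ i j + τ * Real.sign (Shat i j)) :=
  l1_local_min_stationarity_general SigHat hSig μ τ Lhat hLhat Shat hShat hloc
end
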